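/- Let Z be a real m×n matrix with singular value decomposition Z = U·diag(σ)·V', where the singular values σ₁ ≥ σ₂ ≥ ⋯ are arranged in nonincreasing order, and let k ≥ 1 be an integer. For each i ≥ 1 let I_i = {k(i−1)+1, …, ki} and let Z_i = U_{I_i}·diag(σ_{I_i})·V_{I_i}' denote the matrix formed from the i-th block of k consecutive singular values and corresponding singular vectors, so that Z = Σ_i Z_i. Then Σ_{j≥2} ‖Z_j‖_F ≤ (1/√k)·‖Z‖_*. -/

import Mathlib

open Matrix

/-- The Frobenius norm of a real matrix. -/
noncomputable def frobNorm {m n : Type*} [Fintype m] [Fintype n] (X : Matrix m n ℝ) : ℝ :=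
  Real.sqrt (∑ i, ∑ j, X i j ^ 2)

section

open scoped ComplexOrder

/-- The positive semidefinite square root of a positive semidefinite matrix
(removed from Mathlib; restored with its former definition). -/
noncomputable def Matrix.PosSemidef.sqrt {𝕜 : Type*} [RCLike 𝕜] {n : Type*} [Fintype n]
    [DecidableEq n] {A : Matrix n n 𝕜} (hA : A.PosSemidef) : Matrix n n 𝕜 :=
  hA.1.eigenvectorUnitary.1 * diagonal ((↑) ∘ (√·) ∘ hA.1.eigenvalues) *
  (star hA.1.eigenvectorUnitary : Matrix n n 𝕜)

end

/-- The nuclear norm (sum of singular values) of a real matrix, as the trace of √(XᵀX). -/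
noncomputable def nucNorm {m n : Type*} [Fintype m] [Fintype n] [DecidableEq n]
    (X : Matrix m n ℝ) : ℝ :=
  (Matrix.posSemidef_conjTranspose_mul_self X).sqrt.trace

/-!
Both norms can be read off the decomposition: `‖U diag(d) Vᵀ‖_F² = ∑ d_j²`, and since
`V diag(σ) Vᵀ` is the positive square root of `ZᵀZ`, `‖Z‖_* = ∑ σ_j`. As `σ` is nonincreasing,
every singular value in block `a + 1` is at most the mean of block `a`, which has exactly `k`
elements as soon as block `a + 1` is nonempty. Hence `‖Z_{a+1}‖_F ≤ √k · (∑_{block a} σ) / k`,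
and summing over `a` gives the claim.
-/

open scoped MatrixOrder in
lemma Matrix.PosSemidef.sqrt_eq_cfcSqrt {n : Type*} [Fintype n] [DecidableEq n]
    {A : Matrix n n ℝ} (hA : A.PosSemidef) : hA.sqrt = CFC.sqrt A := by
  rw [CFC.sqrt_eq_cfc, cfc_nnreal_eq_real _ A, hA.1.cfc_eq]
  simp only [IsHermitian.cfc, Matrix.PosSemidef.sqrt, Unitary.conjStarAlgAut_apply]
  congr 3
  funext i
  simp [hA.eigenvalues_nonneg i]

open scoped MatrixOrder in
lemma Matrix.PosSemidef.eq_sqrt_of_mul_self_eq {n : Type*} [Fintype n] [DecidableEq n]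
    {A B : Matrix n n ℝ} (hA : A.PosSemidef) (hB : B.PosSemidef) (h : A * A = B) :
    A = hB.sqrt := by
  rw [hB.sqrt_eq_cfcSqrt]
  exact (CFC.sqrt_unique h hA.nonneg).symm

section SVD

variable {m n r : Type*} [Fintype m] [Fintype n] [Fintype r] [DecidableEq r]

omit [Fintype n] in
lemma transpose_mul_self_mul_diagonal_mul_transpose {U : Matrix m r ℝ} (V : Matrix n r ℝ)
    (hU : Uᵀ * U = 1) (d : r → ℝ) :
    (U * diagonal d * Vᵀ)ᵀ * (U * diagonal d * Vᵀ) = V * diagonal (fun j => d j ^ 2) * Vᵀ := by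
  have hd : diagonal (fun j => d j ^ 2) = diagonal d * diagonal d := by
    simp only [diagonal_mul_diagonal, sq]
  simp only [transpose_mul, transpose_transpose, diagonal_transpose, hd, Matrix.mul_assoc]
  rw [← Matrix.mul_assoc Uᵀ, hU, Matrix.one_mul]

lemma trace_mul_diagonal_mul_transpose {V : Matrix n r ℝ} (hV : Vᵀ * V = 1) (d : r → ℝ) :
    (V * diagonal d * Vᵀ).trace = ∑ j, d j := by
  rw [trace_mul_comm, ← Matrix.mul_assoc, hV, Matrix.one_mul, trace_diagonal]

lemma sum_sq_eq_trace_transpose_mul_self (X : Matrix m n ℝ) :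
    ∑ i, ∑ j, X i j ^ 2 = (Xᵀ * X).trace := by
  simp only [trace, diag, mul_apply, transpose_apply, sq]
  exact Finset.sum_comm

lemma frobNorm_mul_diagonal_mul_transpose {U : Matrix m r ℝ} {V : Matrix n r ℝ}
    (hU : Uᵀ * U = 1) (hV : Vᵀ * V = 1) (d : r → ℝ) :
    frobNorm (U * diagonal d * Vᵀ) = √(∑ j, d j ^ 2) := by
  rw [frobNorm, sum_sq_eq_trace_transpose_mul_self,
    transpose_mul_self_mul_diagonal_mul_transpose V hU, trace_mul_diagonal_mul_transpose hV]

lemma nucNorm_mul_diagonal_mul_transpose [DecidableEq n] {U : Matrix m r ℝ} {V : Matrix n r ℝ}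
    (hU : Uᵀ * U = 1) (hV : Vᵀ * V = 1) {σ : r → ℝ} (hσ : ∀ j, 0 ≤ σ j) :
    nucNorm (U * diagonal σ * Vᵀ) = ∑ j, σ j := by
  set W := V * diagonal σ * Vᵀ
  have hW : W.PosSemidef := by
    simpa [conjTranspose_eq_transpose_of_trivial] using
      (posSemidef_diagonal_iff.mpr hσ).mul_mul_conjTranspose_same V
  have hWW : W * W = (U * diagonal σ * Vᵀ)ᴴ * (U * diagonal σ * Vᵀ) := by
    calc W * W = Wᵀ * W := by simp [W, Matrix.mul_assoc]
      _ = _ := by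
        rw [conjTranspose_eq_transpose_of_trivial,
          transpose_mul_self_mul_diagonal_mul_transpose V hV,
          transpose_mul_self_mul_diagonal_mul_transpose V hU]
  rw [nucNorm, ← hW.eq_sqrt_of_mul_self_eq (posSemidef_conjTranspose_mul_self _) hWW,
    trace_mul_diagonal_mul_transpose hV]

end SVD

open Finset

lemma sqrt_sum_sq_le_one_div_sqrt_mul_sum {ι : Type*} {s t : Finset ι} {f : ι → ℝ} {k : ℕ}
    (hk : 0 < k) (hs : #s ≤ k) (ht : k ≤ #t) (hf : ∀ x, 0 ≤ f x)
    (hst : ∀ x ∈ s, ∀ y ∈ t, f x ≤ f y) :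
    √(∑ x ∈ s, f x ^ 2) ≤ 1 / √k * ∑ y ∈ t, f y := by
  set S := ∑ y ∈ t, f y
  have hk' : (0 : ℝ) < k := by exact_mod_cast hk
  have hle_avg : ∀ x ∈ s, f x ≤ S / k := fun x hx => by
    rw [le_div_iff₀ hk']
    calc f x * k ≤ f x * #t := by gcongr; exact hf x
      _ = #t • f x := by rw [nsmul_eq_mul, mul_comm]
      _ ≤ S := card_nsmul_le_sum t f _ (hst x hx)
  have hsum : ∑ x ∈ s, f x ^ 2 ≤ k * (S / k) ^ 2 :=
    calc ∑ x ∈ s, f x ^ 2 ≤ #s • (S / k) ^ 2 :=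
          sum_le_card_nsmul _ _ _ fun x hx => pow_le_pow_left₀ (hf x) (hle_avg x hx) 2
      _ ≤ k * (S / k) ^ 2 := by rw [nsmul_eq_mul]; gcongr
  calc √(∑ x ∈ s, f x ^ 2) ≤ √(k * (S / k) ^ 2) := Real.sqrt_le_sqrt hsum
    _ = √k / k * S := by
        rw [Real.sqrt_mul hk'.le, Real.sqrt_sq (div_nonneg (sum_nonneg fun y _ => hf y) hk'.le)]
        ring
    _ = 1 / √k * S := by rw [Real.sqrt_div_self']

-- Block `a` is the paper's `I_{a+1}`: indices start at `0`.
def divBlock (q k a : ℕ) : Finset (Fin q) := {j | (j : ℕ) / k = a}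

section divBlock

variable {q k : ℕ}

lemma mem_divBlock (hk : 0 < k) {a : ℕ} {j : Fin q} :
    j ∈ divBlock q k a ↔ a * k ≤ j ∧ (j : ℕ) < a * k + k := by
  rw [divBlock, mem_filter, Nat.div_eq_iff hk]
  simp only [mem_univ, true_and]
  omega

lemma card_divBlock_le (hk : 0 < k) (a : ℕ) : #(divBlock q k a) ≤ k :=
  calc #(divBlock q k a) ≤ #(Ico (a * k) (a * k + k)) :=
        card_le_card_of_injOn Fin.val (fun j hj => by simpa [mem_divBlock hk] using hj)
          Fin.val_injective.injOn
    _ = k := by simp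

lemma le_card_divBlock (hk : 0 < k) {a : ℕ} (h : a * k + k ≤ q) : k ≤ #(divBlock q k a) :=
  calc k = #(Ico (a * k) (a * k + k)) := by simp
    _ ≤ #(divBlock q k a) := card_le_card_of_surjOn Fin.val fun x hx => by
        simp only [coe_Ico, Set.mem_Ico] at hx
        exact ⟨⟨x, by omega⟩, (mem_divBlock hk).2 hx, rfl⟩

lemma lt_of_mem_divBlock_succ (hk : 0 < k) {a : ℕ} {i j : Fin q}
    (hi : i ∈ divBlock q k (a + 1)) (hj : j ∈ divBlock q k a) : j < i := by
  rw [mem_divBlock hk, add_one_mul] at hi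
  rw [mem_divBlock hk] at hj
  exact Fin.lt_def.2 (by omega)

lemma sqrt_sum_sq_divBlock_succ_le (hk : 0 < k) {σ : Fin q → ℝ} (hσ : ∀ j, 0 ≤ σ j)
    (hmono : Antitone σ) (a : ℕ) :
    √(∑ j ∈ divBlock q k (a + 1), σ j ^ 2) ≤ 1 / √k * ∑ j ∈ divBlock q k a, σ j := by
  rcases (divBlock q k (a + 1)).eq_empty_or_nonempty with h | ⟨i, hi⟩
  · rw [h, sum_empty, Real.sqrt_zero]
    exact mul_nonneg (by positivity) (sum_nonneg fun j _ => hσ j)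
  · have hfull : a * k + k ≤ q := by
      have := (mem_divBlock hk).1 hi
      rw [add_one_mul] at this
      omega
    exact sqrt_sum_sq_le_one_div_sqrt_mul_sum hk (card_divBlock_le hk _)
      (le_card_divBlock hk hfull) hσ
      fun x hx y hy => hmono (lt_of_mem_divBlock_succ hk hx hy).le

lemma sum_sum_divBlock (σ : Fin q → ℝ) :
    ∑ a ∈ range q, ∑ j ∈ divBlock q k a, σ j = ∑ j, σ j :=
  sum_fiberwise_of_maps_to
    (fun j _ => mem_range.2 ((Nat.div_le_self _ _).trans_lt j.isLt)) σ

end divBlock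

/-- Block decomposition of the singular values: if Z = U diag(σ) Vᵀ is an SVD of Z
(U, V with orthonormal columns, σ nonnegative and nonincreasing), and Z is split into
pieces Zb i corresponding to consecutive blocks of k singular values (block i, starting
from i = 0, contains the singular values with index j satisfying j / k = i), then the sum
of the Frobenius norms of all blocks after the first satisfies
Σ_{i ≥ 1} ‖Zb i‖_F ≤ (1/√k) ‖Z‖₊. -/
theorem sum_frobNorm_tail_blocks_le (m n q k : ℕ) (hk : 1 ≤ k)
    (U : Matrix (Fin m) (Fin q) ℝ) (V : Matrix (Fin n) (Fin q) ℝ) (σ : Fin q → ℝ)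
    (hU : Uᵀ * U = 1) (hV : Vᵀ * V = 1)
    (hσ : ∀ j, 0 ≤ σ j) (hmono : Antitone σ)
    (Z : Matrix (Fin m) (Fin n) ℝ) (hZ : Z = U * Matrix.diagonal σ * Vᵀ)
    (Zb : ℕ → Matrix (Fin m) (Fin n) ℝ)
    (hZb : ∀ i, Zb i =
      U * Matrix.diagonal (fun j : Fin q => if (j : ℕ) / k = i then σ j else 0) * Vᵀ) :
    ∑ i ∈ Finset.Icc 1 q, frobNorm (Zb i) ≤ (1 / Real.sqrt k) * nucNorm Z := by
  have hfrob : ∀ i, frobNorm (Zb i) = √(∑ j ∈ divBlock q k i, σ j ^ 2) := fun i => by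
    rw [hZb, frobNorm_mul_diagonal_mul_transpose hU hV, divBlock, sum_filter]
    simp only [ite_pow, ne_eq, OfNat.ofNat_ne_zero, not_false_eq_true, zero_pow]
  rw [hZ, nucNorm_mul_diagonal_mul_transpose hU hV hσ, ← sum_sum_divBlock, mul_sum,
    ← Ico_add_one_right_eq_Icc, ← zero_add 1, ← sum_Ico_add', ← range_eq_Ico]
  exact sum_le_sum fun a _ =>
    (hfrob (a + 1)).trans_le (sqrt_sum_sq_divBlock_succ_le hk hσ hmono a)
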